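/- arXiv:1805.11743 — 4 statements merged into one kernel-verified Lean document; each statement's English description precedes it below -/
import Mathlib

section
/- Let (Z,η) be a Lebesgue probability space and let Q̃ be a measure-preserving Markov operator on L¹(Z,η) such that every ψ ∈ L²(Z,η) with Q̃*Q̃ψ = ψ is a.e. constant. Then Q̃ is mixing: for all φ, ψ ∈ L²(Z,η), ∫_Z (Q̃^n φ)·ψ̄ dη → (∫_Z φ dη)·(∫_Z ψ̄ dη) as n → ∞. -/
/-!
On `L²` the operator `Q̃` acts as a contraction `T`, because positivity and `Q̃ 1 = 1` give the
Kadison–Schwarz inequality `(Q̃ f)² ≤ Q̃ (f²)`, and `Q̃*` acts as its adjoint. For a contraction,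
`‖u - T*T u‖² ≤ ‖u‖² - ‖T u‖²`; along an orbit `Tⁿ φ` the norms decrease, so these defects tend
to `0`. Hence `⟪Tⁿ φ, w⟫ → 0` for `w` in the range of the self-adjoint operator `1 - T*T`, and,
the family `w ↦ ⟪Tⁿ φ, w⟫` being equicontinuous, for `w` in its closure `ker (1 - T*T)ᗮ`.
That kernel consists of the constants, so `ψ` minus its mean is such a `w`, and the mean part
contributes `(∫ φ) (∫ ψ)` because `Q̃` preserves integrals.
-/

open MeasureTheory Filter ENNReal Topology

noncomputable section

/-- The constant function `1` as an element of `L¹(Z,η)`. -/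
def oneL1 {Z : Type*} [MeasurableSpace Z] (η : Measure Z) [IsFiniteMeasure η] : Lp ℝ 1 η :=
  MemLp.toLp (fun _ => (1 : ℝ)) (memLp_const 1)

/-- A measure-preserving Markov operator on `L¹(Z,η)`: positive, fixes the constants,
and preserves the integral. -/
def IsMarkovOp {Z : Type*} [MeasurableSpace Z] (η : Measure Z) [IsFiniteMeasure η]
    (Q : Lp ℝ 1 η →ₗ[ℝ] Lp ℝ 1 η) : Prop :=
  (∀ φ : Lp ℝ 1 η, 0 ≤ φ → 0 ≤ Q φ) ∧
  Q (oneL1 η) = oneL1 η ∧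
  ∀ φ : Lp ℝ 1 η, ∫ z, (Q φ : Z → ℝ) z ∂η = ∫ z, (φ : Z → ℝ) z ∂η

/-- `Qs` agrees on `L²(Z,η)` with the Hilbert-space adjoint of the restriction of `Q` to `L²`. -/
def MarkovAdjoint {Z : Type*} [MeasurableSpace Z] (η : Measure Z) [IsFiniteMeasure η]
    (Q Qs : Lp ℝ 1 η →ₗ[ℝ] Lp ℝ 1 η) : Prop :=
  ∀ φ ψ : Lp ℝ 1 η, MemLp (φ : Z → ℝ) 2 η → MemLp (ψ : Z → ℝ) 2 η →
    ∫ z, (Q φ : Z → ℝ) z * (ψ : Z → ℝ) z ∂η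
      = ∫ z, (φ : Z → ℝ) z * (Qs ψ : Z → ℝ) z ∂η

open scoped InnerProductSpace InnerProduct

namespace ContinuousLinearMap

lemma norm_pow_apply_le {𝕜 E : Type*} [NontriviallyNormedField 𝕜] [SeminormedAddCommGroup E]
    [NormedSpace 𝕜 E] {T : E →L[𝕜] E} (hT : ‖T‖ ≤ 1) (n : ℕ) (x : E) : ‖(T ^ n) x‖ ≤ ‖x‖ := by
  induction n with
  | zero => simp
  | succ n ih =>
    rw [pow_succ', mul_apply_eq_comp]
    exact (T.le_of_opNorm_le hT _).trans (by simpa using ih)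

variable {𝕜 E : Type*} [RCLike 𝕜] [NormedAddCommGroup E] [InnerProductSpace 𝕜 E] [CompleteSpace E]
  {T : E →L[𝕜] E}

lemma norm_sub_adjoint_mul_self_apply_sq_le (hT : ‖T‖ ≤ 1) (v : E) :
    ‖v - (T† * T) v‖ ^ 2 ≤ ‖v‖ ^ 2 - ‖T v‖ ^ 2 := by
  have hTT : ‖(T† * T) v‖ ≤ ‖T v‖ :=
    (T†).le_of_opNorm_le (by simpa using hT) (T v) |>.trans_eq (one_mul _)
  have : RCLike.re ⟪v, (T† * T) v⟫_𝕜 = ‖T v‖ ^ 2 := by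
    rw [mul_apply_eq_comp, adjoint_inner_right, inner_self_eq_norm_sq]
  rw [@norm_sub_sq 𝕜, this]
  nlinarith [norm_nonneg ((T† * T) v)]

lemma tendsto_sub_adjoint_mul_self_pow_apply (hT : ‖T‖ ≤ 1) (x : E) :
    Tendsto (fun n ↦ (T ^ n) x - (T† * T) ((T ^ n) x)) atTop (𝓝 0) := by
  set b : ℕ → ℝ := fun n ↦ ‖(T ^ n) x‖ ^ 2
  have hb_succ (n : ℕ) : b (n + 1) = ‖T ((T ^ n) x)‖ ^ 2 := by
    simp only [b, pow_succ', mul_apply_eq_comp]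
  have hb_anti : Antitone b := antitone_nat_of_succ_le fun n ↦ by
    rw [hb_succ]
    show _ ≤ ‖(T ^ n) x‖ ^ 2
    gcongr
    exact T.le_of_opNorm_le hT _ |>.trans_eq (one_mul _)
  have hb_lim := tendsto_atTop_ciInf hb_anti ⟨0, by rintro _ ⟨n, rfl⟩; positivity⟩
  have hdiff : Tendsto (fun n ↦ b n - b (n + 1)) atTop (𝓝 0) := by
    simpa using hb_lim.sub (hb_lim.comp (tendsto_add_atTop_nat 1))
  have hsq : Tendsto (fun n ↦ ‖(T ^ n) x - (T† * T) ((T ^ n) x)‖ ^ 2) atTop (𝓝 0) :=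
    squeeze_zero (fun n ↦ by positivity)
      (fun n ↦ hb_succ n ▸ norm_sub_adjoint_mul_self_apply_sq_le hT _) hdiff
  rw [tendsto_zero_iff_norm_tendsto_zero]
  simpa using hsq.sqrt

lemma tendsto_inner_pow_apply_of_mem_orthogonal_ker (hT : ‖T‖ ≤ 1) (x : E) {w : E}
    (hw : w ∈ (1 - T† * T).kerᗮ) : Tendsto (fun n ↦ ⟪(T ^ n) x, w⟫_𝕜) atTop (𝓝 0) := by
  have hB : (1 - T† * T)† = 1 - T† * T :=
    isSelfAdjoint_iff'.mp ((IsSelfAdjoint.one _).sub (IsSelfAdjoint.star_mul_self T))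
  rw [orthogonal_ker, hB] at hw
  have hequi : Equicontinuous fun n (w : E) ↦ ⟪(T ^ n) x, w⟫_𝕜 :=
    LipschitzWith.uniformEquicontinuous _ ‖x‖₊ (fun n ↦ LipschitzWith.of_dist_le_mul fun w w' ↦ by
      rw [dist_eq_norm, dist_eq_norm, ← inner_sub_right (𝕜 := 𝕜)]
      exact (norm_inner_le_norm _ _).trans (by gcongr; exact norm_pow_apply_le hT n x))
      |>.equicontinuous
  refine closure_minimal ?_ (hequi.isClosed_setOfPred_tendsto continuous_const) hw
  rintro _ ⟨y, rfl⟩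
  have := (tendsto_sub_adjoint_mul_self_pow_apply hT x).inner (𝕜 := 𝕜)
    (tendsto_const_nhds (x := y))
  rw [inner_zero_left] at this
  refine this.congr fun n ↦ ?_
  change _ = ⟪(T ^ n) x, (1 - T† * T) y⟫_𝕜
  rw [← hB, adjoint_inner_right]
  rfl

end ContinuousLinearMap

namespace MeasureTheory

namespace Lp

variable {α E : Type*} [MeasurableSpace α] {μ : Measure α} [IsFiniteMeasure μ]
  [NormedAddCommGroup E] [NormedSpace ℝ E] {p q : ℝ≥0∞}

def inclusion (hpq : p ≤ q) : Lp E q μ →ₗ[ℝ] Lp E p μ where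
  toFun f := ((Lp.memLp f).mono_exponent hpq).toLp f
  map_add' f g := (MemLp.toLp_congr _ _ (Lp.coeFn_add f g)).trans <|
    MemLp.toLp_add ((Lp.memLp f).mono_exponent hpq) ((Lp.memLp g).mono_exponent hpq)
  map_smul' c f := (MemLp.toLp_congr _ _ (Lp.coeFn_smul c f)).trans <|
    MemLp.toLp_const_smul c ((Lp.memLp f).mono_exponent hpq)

variable (hpq : p ≤ q)

lemma coeFn_inclusion (f : Lp E q μ) : inclusion hpq f =ᵐ[μ] f :=
  MemLp.coeFn_toLp ((Lp.memLp f).mono_exponent hpq)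

lemma inclusion_injective : Function.Injective (inclusion (E := E) (μ := μ) hpq) :=
  fun f g h ↦ Lp.ext <| (coeFn_inclusion hpq f).symm.trans <| h ▸ coeFn_inclusion hpq g

lemma inclusion_toLp {f : Lp E p μ} (hf : MemLp f q μ) : inclusion hpq (hf.toLp f) = f :=
  Lp.ext <| (coeFn_inclusion hpq _).trans hf.coeFn_toLp

lemma inclusion_const (c : E) : inclusion hpq (Lp.const q μ c) = Lp.const p μ c :=
  Lp.ext <| (coeFn_inclusion hpq _).trans <|
    (Lp.coeFn_const q μ c).trans (Lp.coeFn_const p μ c).symm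

lemma memLp_inclusion (f : Lp E q μ) : MemLp (inclusion hpq f) q μ :=
  (memLp_congr_ae (coeFn_inclusion hpq f)).mpr (Lp.memLp f)

lemma toLp_inclusion (f : Lp E q μ) : (memLp_inclusion hpq f).toLp (inclusion hpq f) = f :=
  Lp.ext <| (MemLp.coeFn_toLp _).trans (coeFn_inclusion hpq f)

lemma integral_coeFn_const [CompleteSpace E] (c : E) :
    ∫ a, Lp.const p μ c a ∂μ = μ.real Set.univ • c := by
  rw [integral_congr_ae (Lp.coeFn_const p μ c)]
  exact integral_const c

end Lp

namespace L2

variable {α : Type*} [MeasurableSpace α] {μ : Measure α}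

lemma real_inner_eq_integral (f g : Lp ℝ 2 μ) : inner ℝ f g = ∫ a, f a * g a ∂μ := by
  simp [inner_def, mul_comm]

lemma norm_sq_eq_integral (f : Lp ℝ 2 μ) : ‖f‖ ^ 2 = ∫ a, f a ^ 2 ∂μ := by
  simp_rw [← real_inner_self_eq_norm_sq, real_inner_eq_integral, sq]

lemma real_inner_const_one_left [IsFiniteMeasure μ] (f : Lp ℝ 2 μ) :
    inner ℝ (Lp.const 2 μ 1) f = ∫ a, f a ∂μ := by
  rw [real_inner_eq_integral]
  refine integral_congr_ae ?_
  filter_upwards [Lp.coeFn_const 2 μ (1 : ℝ)] with a ha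
  rw [ha, Function.const_apply, one_mul]

end L2

end MeasureTheory

lemma sq_le_of_forall_rat {a b : ℝ} (h : ∀ q : ℚ, 0 ≤ b - 2 * q * a + q ^ 2) : a ^ 2 ≤ b := by
  have : 0 ≤ b - 2 * a * a + a ^ 2 :=
    Rat.denseRange_cast.induction_on (p := fun t : ℝ ↦ 0 ≤ b - 2 * t * a + t ^ 2) a
      (isClosed_le continuous_const (by fun_prop)) h
  linarith

lemma coeFn_oneL1 {Z : Type*} [MeasurableSpace Z] (η : Measure Z) [IsFiniteMeasure η] :
    oneL1 η =ᵐ[η] 1 :=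
  MemLp.coeFn_toLp _

lemma oneL1_eq_const {Z : Type*} [MeasurableSpace Z] (η : Measure Z) [IsFiniteMeasure η] :
    oneL1 η = Lp.const 1 η 1 :=
  rfl

lemma coeFn_sub_smul_add_smul_oneL1 {Z : Type*} [MeasurableSpace Z] {η : Measure Z}
    [IsFiniteMeasure η] (g f : Lp ℝ 1 η) (a b : ℝ) :
    g - a • f + b • oneL1 η =ᵐ[η] fun z ↦ g z - a * f z + b := by
  filter_upwards [Lp.coeFn_add (g - a • f) (b • oneL1 η), Lp.coeFn_sub g (a • f),
    Lp.coeFn_smul a f, Lp.coeFn_smul b (oneL1 η), coeFn_oneL1 η] with z h1 h2 h3 h4 h5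
  rw [h1, Pi.add_apply, h2, Pi.sub_apply, h3, h4, Pi.smul_apply, Pi.smul_apply, h5,
    Pi.one_apply, smul_eq_mul, smul_eq_mul, mul_one]

namespace IsMarkovOp

variable {Z : Type*} [MeasurableSpace Z] {η : Measure Z} [IsFiniteMeasure η]
  {Q : Lp ℝ 1 η →ₗ[ℝ] Lp ℝ 1 η}

lemma sq_apply_le (hQ : IsMarkovOp η Q) {f g : Lp ℝ 1 η} (hg : g =ᵐ[η] fun z ↦ f z ^ 2) :
    (fun z ↦ Q f z ^ 2) ≤ᵐ[η] Q g := by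
  -- `Q ((f - q)²) ≥ 0` for every rational `q`; countably many `q` survive the a.e. quantifier.
  have hpos (q : ℚ) : ∀ᵐ z ∂η, 0 ≤ Q g z - 2 * q * Q f z + q ^ 2 := by
    have h0 : 0 ≤ g - (2 * q : ℝ) • f + ((q : ℝ) ^ 2) • oneL1 η := by
      refine (Lp.coeFn_nonneg _).mp ?_
      filter_upwards [coeFn_sub_smul_add_smul_oneL1 g f (2 * q) (q ^ 2), hg] with z hz hgz
      simp only [Pi.zero_apply, hz, hgz]
      nlinarith [sq_nonneg (f z - q)]
    have h1 := hQ.1 _ h0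
    rw [map_add, map_sub, map_smul, map_smul, hQ.2.1] at h1
    filter_upwards [(Lp.coeFn_nonneg _).mpr h1,
      coeFn_sub_smul_add_smul_oneL1 (Q g) (Q f) (2 * q) (q ^ 2)] with z h1z hz
    rwa [hz] at h1z
  filter_upwards [ae_all_iff.mpr hpos] with z hz
  exact sq_le_of_forall_rat hz

lemma memLp_two_apply (hQ : IsMarkovOp η Q) {f : Lp ℝ 1 η} (hf : MemLp f 2 η) :
    MemLp (Q f) 2 η := by
  refine (memLp_two_iff_integrable_sq (Lp.aestronglyMeasurable _)).mpr ?_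
  refine (L1.integrable_coeFn (Q (hf.integrable_sq.toL1 _))).mono'
    ((Lp.aestronglyMeasurable _).pow 2) ?_
  filter_upwards [hQ.sq_apply_le hf.integrable_sq.coeFn_toL1] with z hz
  rwa [Real.norm_of_nonneg (sq_nonneg _)]

lemma integral_sq_apply_le (hQ : IsMarkovOp η Q) {f : Lp ℝ 1 η} (hf : MemLp f 2 η) :
    ∫ z, Q f z ^ 2 ∂η ≤ ∫ z, f z ^ 2 ∂η := by
  have hg := hf.integrable_sq.coeFn_toL1
  calc ∫ z, Q f z ^ 2 ∂η ≤ ∫ z, Q (hf.integrable_sq.toL1 _) z ∂η :=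
        integral_mono_ae (hQ.memLp_two_apply hf).integrable_sq (L1.integrable_coeFn _)
          (hQ.sq_apply_le hg)
    _ = ∫ z, f z ^ 2 ∂η := (hQ.2.2 _).trans (integral_congr_ae hg)

lemma integral_pow_apply (hQ : IsMarkovOp η Q) (n : ℕ) (f : Lp ℝ 1 η) :
    ∫ z, (Q ^ n) f z ∂η = ∫ z, f z ∂η := by
  induction n with
  | zero => rfl
  | succ n ih => rw [pow_succ', Module.End.mul_apply, hQ.2.2, ih]

lemma norm_toLp_apply_le (hQ : IsMarkovOp η Q) {f : Lp ℝ 1 η} (hf : MemLp f 2 η) :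
    ‖(hQ.memLp_two_apply hf).toLp (Q f)‖ ≤ ‖hf.toLp f‖ := by
  refine (pow_le_pow_iff_left₀ (norm_nonneg _) (norm_nonneg _) two_ne_zero).mp ?_
  have hQf : ∫ z, (hQ.memLp_two_apply hf).toLp (Q f) z ^ 2 ∂η = ∫ z, Q f z ^ 2 ∂η :=
    integral_congr_ae <| by
      filter_upwards [MemLp.coeFn_toLp (hQ.memLp_two_apply hf)] with z hz; rw [hz]
  have hf' : ∫ z, hf.toLp f z ^ 2 ∂η = ∫ z, f z ^ 2 ∂η :=
    integral_congr_ae <| by filter_upwards [hf.coeFn_toLp] with z hz; rw [hz]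
  rw [L2.norm_sq_eq_integral, L2.norm_sq_eq_integral, hQf, hf']
  exact hQ.integral_sq_apply_le hf

def toL2 (hQ : IsMarkovOp η Q) : Lp ℝ 2 η →L[ℝ] Lp ℝ 2 η :=
  LinearMap.mkContinuous
    { toFun x := (hQ.memLp_two_apply (Lp.memLp_inclusion one_le_two x)).toLp
        (Q (Lp.inclusion one_le_two x))
      map_add' x y := Lp.inclusion_injective one_le_two <| by
        simp only [map_add, Lp.inclusion_toLp]
      map_smul' c x := Lp.inclusion_injective one_le_two <| by
        simp only [map_smul, Lp.inclusion_toLp, RingHom.id_apply] }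
    1 fun x ↦ by
      simpa [Lp.toLp_inclusion] using hQ.norm_toLp_apply_le (Lp.memLp_inclusion one_le_two x)

lemma norm_toL2_le (hQ : IsMarkovOp η Q) : ‖hQ.toL2‖ ≤ 1 :=
  LinearMap.mkContinuous_norm_le _ zero_le_one _

lemma inclusion_toL2_apply (hQ : IsMarkovOp η Q) (x : Lp ℝ 2 η) :
    Lp.inclusion one_le_two (hQ.toL2 x) = Q (Lp.inclusion one_le_two x) :=
  Lp.inclusion_toLp one_le_two (hQ.memLp_two_apply (Lp.memLp_inclusion one_le_two x))

lemma coeFn_toL2 (hQ : IsMarkovOp η Q) (x : Lp ℝ 2 η) :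
    hQ.toL2 x =ᵐ[η] Q (Lp.inclusion one_le_two x) :=
  MemLp.coeFn_toLp (hQ.memLp_two_apply (Lp.memLp_inclusion one_le_two x))

lemma inclusion_toL2_pow_apply (hQ : IsMarkovOp η Q) (n : ℕ) (x : Lp ℝ 2 η) :
    Lp.inclusion one_le_two ((hQ.toL2 ^ n) x) = (Q ^ n) (Lp.inclusion one_le_two x) := by
  induction n with
  | zero => rfl
  | succ n ih => rw [pow_succ', pow_succ', mul_apply_eq_comp, Module.End.mul_apply,
      inclusion_toL2_apply, ih]

lemma integral_toL2_pow_apply (hQ : IsMarkovOp η Q) (n : ℕ) (x : Lp ℝ 2 η) :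
    ∫ z, (hQ.toL2 ^ n) x z ∂η = ∫ z, x z ∂η := by
  rw [← integral_congr_ae (Lp.coeFn_inclusion one_le_two _), inclusion_toL2_pow_apply,
    hQ.integral_pow_apply, integral_congr_ae (Lp.coeFn_inclusion one_le_two _)]

lemma integral_pow_apply_mul_eq_inner (hQ : IsMarkovOp η Q) (n : ℕ) {φ ψ : Lp ℝ 1 η}
    (hφ : MemLp φ 2 η) (hψ : MemLp ψ 2 η) :
    ∫ z, (Q ^ n) φ z * ψ z ∂η = inner ℝ ((hQ.toL2 ^ n) (hφ.toLp φ)) (hψ.toLp ψ) := by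
  have hQφ : (Q ^ n) φ = Lp.inclusion one_le_two ((hQ.toL2 ^ n) (hφ.toLp φ)) := by
    rw [inclusion_toL2_pow_apply, Lp.inclusion_toLp]
  rw [L2.real_inner_eq_integral, hQφ]
  refine integral_congr_ae ?_
  filter_upwards [Lp.coeFn_inclusion one_le_two ((hQ.toL2 ^ n) (hφ.toLp φ)), hψ.coeFn_toLp]
    with z h1 h2
  rw [h1, h2]

lemma adjoint_toL2 {Q' : Lp ℝ 1 η →ₗ[ℝ] Lp ℝ 1 η} (hQ : IsMarkovOp η Q) (hQ' : IsMarkovOp η Q')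
    (hadj : MarkovAdjoint η Q Q') : ContinuousLinearMap.adjoint hQ.toL2 = hQ'.toL2 := by
  refine ((ContinuousLinearMap.eq_adjoint_iff _ _).mpr fun x y ↦ ?_).symm
  have hx : ∫ z, hQ'.toL2 x z * y z ∂η
      = ∫ z, Lp.inclusion one_le_two y z * Q' (Lp.inclusion one_le_two x) z ∂η :=
    integral_congr_ae <| by
      filter_upwards [hQ'.coeFn_toL2 x, Lp.coeFn_inclusion one_le_two y] with z h1 h2
      rw [h1, h2, mul_comm]
  have hy : ∫ z, x z * hQ.toL2 y z ∂η
      = ∫ z, Q (Lp.inclusion one_le_two y) z * Lp.inclusion one_le_two x z ∂η :=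
    integral_congr_ae <| by
      filter_upwards [hQ.coeFn_toL2 y, Lp.coeFn_inclusion one_le_two x] with z h1 h2
      rw [h1, h2, mul_comm]
  rw [L2.real_inner_eq_integral, L2.real_inner_eq_integral, hx, hy,
    hadj _ _ (Lp.memLp_inclusion _ y) (Lp.memLp_inclusion _ x)]

lemma exists_eq_smul_const_of_mem_ker {Q' : Lp ℝ 1 η →ₗ[ℝ] Lp ℝ 1 η} (hQ : IsMarkovOp η Q)
    (hQ' : IsMarkovOp η Q') (hadj : MarkovAdjoint η Q Q')
    (hfix : ∀ f : Lp ℝ 1 η, MemLp f 2 η → Q' (Q f) = f → ∃ c : ℝ, f = c • oneL1 η)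
    {v : Lp ℝ 2 η} (hv : v ∈ (1 - hQ.toL2† * hQ.toL2).ker) : ∃ c : ℝ, v = c • Lp.const 2 η 1 := by
  have hfixed : hQ'.toL2 (hQ.toL2 v) = v := by
    rw [← hQ.adjoint_toL2 hQ' hadj]
    exact (sub_eq_zero.mp hv).symm
  obtain ⟨c, hc⟩ := hfix _ (Lp.memLp_inclusion one_le_two v) <| by
    rw [← hQ.inclusion_toL2_apply, ← hQ'.inclusion_toL2_apply, hfixed]
  refine ⟨c, Lp.inclusion_injective one_le_two ?_⟩
  rw [hc, map_smul, Lp.inclusion_const, oneL1_eq_const]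

end IsMarkovOp

theorem statement1_general
    {Z : Type*} [MeasurableSpace Z]
    (η : Measure Z) [IsProbabilityMeasure η]
    (Qt Qs : Lp ℝ 1 η →ₗ[ℝ] Lp ℝ 1 η)
    (hQt : IsMarkovOp η Qt) (hQs : IsMarkovOp η Qs) (hadj : MarkovAdjoint η Qt Qs)
    (hfix : ∀ ψ : Lp ℝ 1 η, MemLp (ψ : Z → ℝ) 2 η → Qs (Qt ψ) = ψ →
      ∃ c : ℝ, ψ = c • oneL1 η) :
    ∀ φ ψ : Lp ℝ 1 η, MemLp (φ : Z → ℝ) 2 η → MemLp (ψ : Z → ℝ) 2 η →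
      Tendsto (fun n : ℕ => ∫ z, ((Qt ^ n) φ : Z → ℝ) z * (ψ : Z → ℝ) z ∂η) atTop
        (𝓝 ((∫ z, (φ : Z → ℝ) z ∂η) * ∫ z, (ψ : Z → ℝ) z ∂η)) := by
  intro φ ψ hφ hψ
  set T := hQt.toL2
  set w := hψ.toLp ψ - (∫ z, ψ z ∂η) • Lp.const 2 η 1
  have hw : w ∈ (1 - T† * T).kerᗮ := by
    rw [Submodule.mem_orthogonal]
    intro v hv
    obtain ⟨c, rfl⟩ := hQt.exists_eq_smul_const_of_mem_ker hQs hadj hfix hv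
    rw [real_inner_smul_left, inner_sub_right, real_inner_smul_right, L2.real_inner_const_one_left,
      L2.real_inner_const_one_left, Lp.integral_coeFn_const, integral_congr_ae hψ.coeFn_toLp]
    simp
  have hlim := (T.tendsto_inner_pow_apply_of_mem_orthogonal_ker hQt.norm_toL2_le (hφ.toLp φ) hw)
    |>.add_const ((∫ z, φ z ∂η) * ∫ z, ψ z ∂η)
  rw [zero_add] at hlim
  refine hlim.congr fun n ↦ ?_
  rw [hQt.integral_pow_apply_mul_eq_inner n hφ hψ,
    ← sub_add_cancel (hψ.toLp ψ) ((∫ z, ψ z ∂η) • Lp.const 2 η 1), inner_add_right,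
    real_inner_smul_right, real_inner_comm (Lp.const 2 η 1),
    L2.real_inner_const_one_left, hQt.integral_toL2_pow_apply, integral_congr_ae hφ.coeFn_toLp,
    mul_comm]

/-- If `Q̃` is a measure-preserving Markov operator on `L¹(Z,η)` of a Lebesgue
probability space such that every `ψ ∈ L²` with `Q̃*Q̃ψ = ψ` is a.e. constant, then `Q̃` is mixing:
`⟨Q̃^n φ, ψ⟩ → (∫ φ)(∫ ψ)` for all `φ, ψ ∈ L²(Z,η)`. -/
theorem statement1
    {Z : Type*} [MeasurableSpace Z] [StandardBorelSpace Z]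
    (η : Measure Z) [IsProbabilityMeasure η]
    (Qt Qs : Lp ℝ 1 η →ₗ[ℝ] Lp ℝ 1 η)
    (hQt : IsMarkovOp η Qt) (hQs : IsMarkovOp η Qs) (hadj : MarkovAdjoint η Qt Qs)
    (hfix : ∀ ψ : Lp ℝ 1 η, MemLp (ψ : Z → ℝ) 2 η → Qs (Qt ψ) = ψ →
      ∃ c : ℝ, ψ = c • oneL1 η) :
    ∀ φ ψ : Lp ℝ 1 η, MemLp (φ : Z → ℝ) 2 η → MemLp (ψ : Z → ℝ) 2 η →
      Tendsto (fun n : ℕ => ∫ z, ((Qt ^ n) φ : Z → ℝ) z * (ψ : Z → ℝ) z ∂η) atTop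
        (𝓝 ((∫ z, (φ : Z → ℝ) z ∂η) * ∫ z, (ψ : Z → ℝ) z ∂η)) :=
  statement1_general η Qt Qs hQt hQs hadj hfix
end
end

section
/- Let (Z,η) be a Lebesgue probability space and let Q be a measure-preserving Markov operator on L¹(Z,η) satisfying Assumption (A2) (with decomposition Q = VW, Q* = WV) and Assumption (A5) (with constants C, K, a, b, n₀ and operators A_n), and assume that Q is mixing: ∫_Z (Q^n φ)·ψ̄ dη → (∫_Z φ dη)(∫_Z ψ̄ dη) for all φ, ψ ∈ L²(Z,η). Then for all nonnegative φ, ψ ∈ L^∞(Z,η) with ∫_Z φ dη = ∫_Z ψ dη = 1 one has liminf_{n→∞} Σ_{j=−b}^{b} ⟨Q^{n+j} φ, Q^{n} ψ⟩_{L²(Z,η)} ≥ 1/C; in particular, no such pair φ, ψ satisfies limsup_{n→∞} Σ_{j=−b}^{b} ⟨Q^{n+j} φ, Q^{n} ψ⟩ < ε whenever ε < 1/C. -/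
/-! Pair Assumption (A5) with `ψ`. Since `Q = VW` and `Q* = WV`, we have `W Q^k = (Q*)^k W`, so the
left side becomes `⟨Q^{2n-a} ψ, Wφ⟩`, which tends to `∫ψ · ∫Wφ = 1` by mixing. Each main term on
the right becomes `⟨Q^{n+j} φ, Q^n ψ⟩`, and the error `⟨A_n φ, ψ⟩ ≤ ‖ψ‖_∞ α_n ‖φ‖₁` tends to `0`
because `Σ α_n < ∞`. Hence `1 ≤ C · liminf_n Σ_j ⟨Q^{n+j} φ, Q^n ψ⟩`. -/

open MeasureTheory Filter ENNReal Topology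

noncomputable section

open Set

section

variable {Z : Type*} [MeasurableSpace Z] {η : Measure Z}

theorem exists_monotone_clm_eq_integral_mul {g : Z → ℝ} (hg : MemLp g ∞ η)
    (hg0 : 0 ≤ᵐ[η] g) :
    ∃ ℓ : Lp ℝ 1 η →L[ℝ] ℝ, Monotone ℓ ∧ ∀ f : Lp ℝ 1 η, ℓ f = ∫ z, g z * f z ∂η := by
  set ℓ := (ContinuousLinearMap.mul ℝ ℝ).lpPairing η ∞ 1 (hg.toLp g)
  have hℓ : ∀ f : Lp ℝ 1 η, ℓ f = ∫ z, g z * f z ∂η := fun f => by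
    rw [ContinuousLinearMap.lpPairing_eq_integral]
    refine integral_congr_ae ?_
    filter_upwards [hg.coeFn_toLp] with z hz
    simp [hz]
  refine ⟨ℓ, fun f f' hff' => ?_, hℓ⟩
  have : 0 ≤ ℓ (f' - f) := by
    rw [hℓ]
    refine integral_nonneg_of_ae ?_
    filter_upwards [hg0, (Lp.coeFn_nonneg _).2 (sub_nonneg.2 hff')] with z h1 h2
    exact mul_nonneg h1 h2
  simpa [sub_nonneg] using this

theorem Lp.norm_le_mul_norm_of_eLpNorm_le {p : ℝ≥0∞} {f g : Lp ℝ p η} {c : ℝ} (hc : 0 ≤ c)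
    (h : eLpNorm f p η ≤ ENNReal.ofReal c * eLpNorm g p η) : ‖f‖ ≤ c * ‖g‖ := by
  rw [Lp.norm_def, Lp.norm_def, ← ENNReal.toReal_ofReal hc, ← ENNReal.toReal_mul]
  exact ENNReal.toReal_mono (ENNReal.mul_ne_top ENNReal.ofReal_ne_top (Lp.eLpNorm_ne_top g)) h

end

theorem LinearMap.apply_comp_pow_apply {R M : Type*} [Semiring R] [AddCommMonoid M] [Module R M]
    (V W : M →ₗ[R] M) (n : ℕ) (x : M) :
    W (((V ∘ₗ W) ^ n) x) = ((W ∘ₗ V) ^ n) (W x) :=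
  LinearMap.congr_fun ((SemiconjBy.pow_right (mul_assoc W V W).symm n)) x

section Markov

variable {Z : Type*} [MeasurableSpace Z] {η : Measure Z} [IsFiniteMeasure η]
  {M N : Lp ℝ 1 η →ₗ[ℝ] Lp ℝ 1 η} {f g : Lp ℝ 1 η} {c d : ℝ}

namespace IsMarkovOp

theorem monotone (hM : IsMarkovOp η M) : Monotone M := fun f g h => by
  simpa [sub_nonneg] using hM.1 (g - f) (sub_nonneg.2 h)

theorem mapsTo_Icc (hM : IsMarkovOp η M) (c : ℝ) :
    MapsTo M (Icc 0 (c • oneL1 η)) (Icc 0 (c • oneL1 η)) := fun f hf =>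
  ⟨hM.1 f hf.1, by simpa [hM.2.1] using hM.monotone hf.2⟩

theorem comp (hM : IsMarkovOp η M) (hN : IsMarkovOp η N) : IsMarkovOp η (M ∘ₗ N) :=
  ⟨fun f hf => hM.1 _ (hN.1 f hf), by simp [hN.2.1, hM.2.1], fun f => by simp [hM.2.2, hN.2.2]⟩

theorem pow (hM : IsMarkovOp η M) (n : ℕ) : IsMarkovOp η (M ^ n) := by
  induction n with
  | zero => exact ⟨fun f hf => hf, rfl, fun f => rfl⟩
  | succ n ih => rw [pow_succ']; exact hM.comp ih

end IsMarkovOp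

theorem coeFn_smul_oneL1 (c : ℝ) : (c • oneL1 η : Lp ℝ 1 η) =ᵐ[η] fun _ => c := by
  filter_upwards [Lp.coeFn_smul c (oneL1 η), MemLp.coeFn_toLp (memLp_const (μ := η) (1 : ℝ))]
    with z hs h1
  rw [hs, Pi.smul_apply, oneL1, h1, smul_eq_mul, mul_one]

theorem ae_mem_Icc_of_mem_Icc (hf : f ∈ Icc 0 (c • oneL1 η)) : ∀ᵐ z ∂η, f z ∈ Icc 0 c := by
  filter_upwards [(Lp.coeFn_nonneg f).2 hf.1, (Lp.coeFn_le _ _).2 hf.2, coeFn_smul_oneL1 c]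
    with z h0 hc hs
  exact ⟨h0, hs ▸ hc⟩

theorem memLp_two_of_mem_Icc (hf : f ∈ Icc 0 (c • oneL1 η)) : MemLp f 2 η := by
  refine (memLp_top_of_bound (Lp.aestronglyMeasurable f) c ?_).mono_exponent le_top
  filter_upwards [ae_mem_Icc_of_mem_Icc hf] with z hz
  rw [Real.norm_of_nonneg hz.1]
  exact hz.2

theorem exists_mem_Icc_of_memLp_top (hf0 : 0 ≤ f) (hf : MemLp f ∞ η) :
    ∃ c : ℝ, f ∈ Icc 0 (c • oneL1 η) := by
  refine ⟨lpNorm f ∞ η, hf0, (Lp.coeFn_le _ _).1 ?_⟩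
  filter_upwards [ae_le_lpNorm_exponent_top hf, coeFn_smul_oneL1 (lpNorm f ∞ η)] with z hz hs
  rw [hs]
  exact (Real.le_norm_self _).trans hz

theorem integral_mul_mem_Icc (hf : f ∈ Icc 0 (c • oneL1 η)) (hg : 0 ≤ g) :
    ∫ z, f z * g z ∂η ∈ Icc 0 (c * ∫ z, g z ∂η) := by
  have hf' := ae_mem_Icc_of_mem_Icc hf
  have hg' := (Lp.coeFn_nonneg g).2 hg
  refine ⟨integral_nonneg_of_ae ?_, ?_⟩
  · filter_upwards [hf', hg'] with z h1 h2
    exact mul_nonneg h1.1 h2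
  · rw [← integral_const_mul]
    refine integral_mono_ae
      ((L1.integrable_coeFn g).bdd_mul (c := c) (Lp.aestronglyMeasurable f) ?_)
      ((L1.integrable_coeFn g).const_mul c) ?_
    · filter_upwards [hf'] with z hz
      rw [Real.norm_of_nonneg hz.1]
      exact hz.2
    · filter_upwards [hf', hg'] with z h1 h2
      exact mul_le_mul_of_nonneg_right h1.2 h2

-- `MarkovAdjoint` only holds on `L²`, so the iteration stays among bounded functions,
-- which Markov operators preserve.
theorem MarkovAdjoint.integral_pow_mul {Q Qs : Lp ℝ 1 η →ₗ[ℝ] Lp ℝ 1 η}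
    (hadj : MarkovAdjoint η Q Qs) (hQ : IsMarkovOp η Q) (hQs : IsMarkovOp η Qs) (n : ℕ)
    (hf : f ∈ Icc 0 (c • oneL1 η)) (hg : g ∈ Icc 0 (d • oneL1 η)) :
    ∫ z, ((Q ^ n) f) z * g z ∂η = ∫ z, f z * ((Qs ^ n) g) z ∂η := by
  induction n generalizing g with
  | zero => rfl
  | succ n ih =>
    rw [pow_succ' Q, pow_succ Qs, Module.End.mul_apply, Module.End.mul_apply,
      hadj _ _ (memLp_two_of_mem_Icc ((hQ.pow n).mapsTo_Icc c hf)) (memLp_two_of_mem_Icc hg)]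
    exact ih (hQs.mapsTo_Icc d hg)

theorem IsMarkovOp.integral_pow_mul_pow_mem_Icc {Q : Lp ℝ 1 η →ₗ[ℝ] Lp ℝ 1 η}
    (hQ : IsMarkovOp η Q) (hf : f ∈ Icc 0 (c • oneL1 η)) (hg : 0 ≤ g) (m n : ℕ) :
    ∫ z, ((Q ^ m) f) z * ((Q ^ n) g) z ∂η ∈ Icc 0 (c * ∫ z, g z ∂η) := by
  simpa only [(hQ.pow n).2.2] using
    integral_mul_mem_Icc ((hQ.pow m).mapsTo_Icc c hf) ((hQ.pow n).1 g hg)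

theorem MarkovAdjoint.integral_mul_apply_pow {Q V W : Lp ℝ 1 η →ₗ[ℝ] Lp ℝ 1 η}
    (hadj : MarkovAdjoint η Q (W ∘ₗ V)) (hQ : IsMarkovOp η Q) (hV : IsMarkovOp η V)
    (hW : IsMarkovOp η W) (hVW : Q = V ∘ₗ W) (k : ℕ)
    (hf : f ∈ Icc 0 (c • oneL1 η)) (hg : g ∈ Icc 0 (d • oneL1 η)) :
    ∫ z, g z * (W ((Q ^ k) f)) z ∂η = ∫ z, ((Q ^ k) g) z * (W f) z ∂η := by
  have hWQ : W ((Q ^ k) f) = ((W ∘ₗ V) ^ k) (W f) := hVW ▸ LinearMap.apply_comp_pow_apply V W k f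
  rw [hWQ]
  exact (hadj.integral_pow_mul hQ (hW.comp hV) k hg (hW.mapsTo_Icc c hf)).symm

end Markov

theorem tendsto_atTop_zero_of_sum_range_le {α : ℕ → ℝ} {K : ℝ} {n₀ : ℕ} (hα : ∀ n, 0 ≤ α n)
    (hsum : ∀ N, ∑ n ∈ Finset.range N, α (n₀ + n) ≤ K) : Tendsto α atTop (𝓝 0) := by
  have := (summable_of_sum_range_le (fun n => hα _) hsum).tendsto_atTop_zero
  exact (tendsto_add_atTop_iff_nat n₀).1 (by simpa only [add_comm] using this)

theorem div_le_liminf_of_le_mul_add {S t e : ℕ → ℝ} {C L B : ℝ} (hC : 0 < C)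
    (ht : Tendsto t atTop (𝓝 L)) (he : Tendsto e atTop (𝓝 0))
    (hle : ∀ᶠ n in atTop, t n ≤ C * S n + e n) (hS : ∀ n, S n ≤ B) :
    L / C ≤ liminf S atTop := by
  have hu : Tendsto (fun n => (t n - e n) / C) atTop (𝓝 (L / C)) := by
    simpa using (ht.sub he).div_const C
  rw [← hu.liminf_eq]
  refine liminf_le_liminf (hle.mono fun n hn => ?_) hu.isBoundedUnder_ge
    (isCoboundedUnder_ge_of_le atTop hS)
  rw [div_le_iff₀ hC]
  linarith

theorem not_limsup_lt_of_le_liminf {S : ℕ → ℝ} {a l u ε : ℝ} (h : a ≤ liminf S atTop)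
    (hS : ∀ n, S n ∈ Icc l u) (hε : ε < a) : ¬ limsup S atTop < ε := fun hlt => by
  have : liminf S atTop ≤ limsup S atTop :=
    liminf_le_limsup (isBoundedUnder_of ⟨u, fun n => (hS n).2⟩)
      (isBoundedUnder_of ⟨l, fun n => (hS n).1⟩)
  linarith

theorem statement4_general
    {Z : Type*} [MeasurableSpace Z]
    (η : Measure Z) [IsProbabilityMeasure η]
    (Q : Lp ℝ 1 η →ₗ[ℝ] Lp ℝ 1 η) (hQ : IsMarkovOp η Q)
    -- Assumption (A2)
    (V W : Lp ℝ 1 η →ₗ[ℝ] Lp ℝ 1 η)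
    (hV : IsMarkovOp η V) (hW : IsMarkovOp η W)
    (hVW : Q = V ∘ₗ W) (hadj : MarkovAdjoint η Q (W ∘ₗ V))
    -- `Q` is mixing
    (hmix : ∀ φ ψ : Lp ℝ 1 η, MemLp (φ : Z → ℝ) 2 η → MemLp (ψ : Z → ℝ) 2 η →
      Tendsto (fun n : ℕ => ∫ z, ((Q ^ n) φ : Z → ℝ) z * (ψ : Z → ℝ) z ∂η) atTop
        (𝓝 ((∫ z, (φ : Z → ℝ) z ∂η) * ∫ z, (ψ : Z → ℝ) z ∂η)))
    -- Assumption (A5), with explicit constants C, K, a, b, n₀ and operators A_n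
    (C K : ℝ) (hC : 0 < C)
    (a b n₀ : ℕ)
    (A : ℕ → Lp ℝ 1 η →ₗ[ℝ] Lp ℝ 1 η) (α : ℕ → ℝ)
    (hαnn : ∀ n, 0 ≤ α n)
    (hαsum : ∀ N : ℕ, ∑ n ∈ Finset.range N, α (n₀ + n) ≤ K)
    (hAbdd : ∀ n, n₀ ≤ n → ∀ p : ℝ≥0∞, 1 ≤ p → ∀ φ : Lp ℝ 1 η,
      eLpNorm ((A n φ : Lp ℝ 1 η) : Z → ℝ) p η ≤ ENNReal.ofReal (α n) * eLpNorm (φ : Z → ℝ) p η)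
    (hA5 : ∀ n, n₀ ≤ n → ∀ φ : Lp ℝ 1 η, 0 ≤ φ →
      W ((Q ^ (2 * n - a)) φ) ≤
        C • (∑ j ∈ Finset.range (2 * b + 1), ((W ∘ₗ V) ^ n) ((Q ^ (n - b + j)) φ)) + A n φ)
    -- the pair of functions
    (φ ψ : Lp ℝ 1 η) (hφ0 : 0 ≤ φ) (hψ0 : 0 ≤ ψ)
    (hφtop : MemLp (φ : Z → ℝ) ∞ η) (hψtop : MemLp (ψ : Z → ℝ) ∞ η)
    (hφ1 : ∫ z, (φ : Z → ℝ) z ∂η = 1) (hψ1 : ∫ z, (ψ : Z → ℝ) z ∂η = 1) :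
    1 / C ≤
      liminf (fun n : ℕ => ∑ j ∈ Finset.range (2 * b + 1),
        ∫ z, ((Q ^ (n - b + j)) φ : Z → ℝ) z * ((Q ^ n) ψ : Z → ℝ) z ∂η) atTop ∧
    ∀ ε : ℝ, ε < 1 / C →
      ¬ (limsup (fun n : ℕ => ∑ j ∈ Finset.range (2 * b + 1),
        ∫ z, ((Q ^ (n - b + j)) φ : Z → ℝ) z * ((Q ^ n) ψ : Z → ℝ) z ∂η) atTop < ε) := by
  obtain ⟨cφ, hφc⟩ := exists_mem_Icc_of_memLp_top hφ0 hφtop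
  obtain ⟨cψ, hψc⟩ := exists_mem_Icc_of_memLp_top hψ0 hψtop
  obtain ⟨ℓ, hℓ_mono, hℓ⟩ :=
    exists_monotone_clm_eq_integral_mul hψtop ((Lp.coeFn_nonneg ψ).2 hψ0)
  set S := fun n : ℕ => ∑ j ∈ Finset.range (2 * b + 1),
    ∫ z, ((Q ^ (n - b + j)) φ : Z → ℝ) z * ((Q ^ n) ψ : Z → ℝ) z ∂η with hS
  have hS_mem : ∀ n, S n ∈ Icc 0 ((2 * b + 1) * cφ) := fun n => by
    have hterm := fun j => hQ.integral_pow_mul_pow_mem_Icc hφc hψ0 (n - b + j) n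
    rw [hψ1, mul_one] at hterm
    refine ⟨Finset.sum_nonneg fun j _ => (hterm j).1, ?_⟩
    simpa using Finset.sum_le_sum fun j (_ : j ∈ Finset.range (2 * b + 1)) => (hterm j).2
  have ht : Tendsto (fun n => ℓ (W ((Q ^ (2 * n - a)) φ))) atTop (𝓝 1) := by
    have hWφ := hW.mapsTo_Icc cφ hφc
    have hk : Tendsto (fun n : ℕ => 2 * n - a) atTop atTop :=
      tendsto_atTop_mono (fun n => by omega) (tendsto_sub_atTop_nat a)
    have := (hmix ψ (W φ) (memLp_two_of_mem_Icc hψc) (memLp_two_of_mem_Icc hWφ)).comp hk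
    rw [hψ1, hW.2.2, hφ1, one_mul] at this
    exact this.congr fun n => by
      rw [Function.comp_apply, hℓ, hadj.integral_mul_apply_pow hQ hV hW hVW _ hφc hψc]
  have hle : ∀ n, n₀ ≤ n → ℓ (W ((Q ^ (2 * n - a)) φ)) ≤ C * S n + ‖ℓ‖ * ‖φ‖ * α n := by
    intro n hn
    have hA : ‖A n φ‖ ≤ α n * ‖φ‖ :=
      Lp.norm_le_mul_norm_of_eLpNorm_le (hαnn n) (hAbdd n hn 1 le_rfl φ)
    calc ℓ (W ((Q ^ (2 * n - a)) φ))
        ≤ ℓ (C • (∑ j ∈ Finset.range (2 * b + 1), ((W ∘ₗ V) ^ n) ((Q ^ (n - b + j)) φ))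
            + A n φ) := hℓ_mono (hA5 n hn φ hφ0)
      _ = C * S n + ℓ (A n φ) := by
        simp only [map_add, map_smul, map_sum, smul_eq_mul, hS]
        congr 2
        refine Finset.sum_congr rfl fun j _ => ?_
        rw [hℓ, ← hadj.integral_pow_mul hQ (hW.comp hV) n hψc ((hQ.pow _).mapsTo_Icc cφ hφc)]
        simp only [mul_comm]
      _ ≤ C * S n + ‖ℓ‖ * ‖φ‖ * α n := by
        grw [Real.le_norm_self (ℓ (A n φ)), ℓ.le_opNorm, hA]
        linarith
  have hliminf : 1 / C ≤ liminf S atTop :=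
    div_le_liminf_of_le_mul_add hC ht
      (by simpa using (tendsto_atTop_zero_of_sum_range_le hαnn hαsum).const_mul (‖ℓ‖ * ‖φ‖))
      (eventually_atTop.2 ⟨n₀, hle⟩) fun n => (hS_mem n).2
  exact ⟨hliminf, fun ε hε => not_limsup_lt_of_le_liminf hliminf hS_mem hε⟩

/-- Under Assumption (A2) (Q = VW, Q* = WV), Assumption (A5) and mixing of `Q`,
for all nonnegative `φ, ψ ∈ L^∞` with integral 1, the liminf of
`Σ_{j=−b}^{b} ⟨Q^{n+j}φ, Q^{n}ψ⟩` is at least `1/C`; in particular no such pair satisfies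
`limsup Σ_j ⟨Q^{n+j}φ, Q^{n}ψ⟩ < ε` with `ε < 1/C`. -/
theorem statement4
    {Z : Type*} [MeasurableSpace Z] [StandardBorelSpace Z]
    (η : Measure Z) [IsProbabilityMeasure η]
    (Q : Lp ℝ 1 η →ₗ[ℝ] Lp ℝ 1 η) (hQ : IsMarkovOp η Q)
    -- Assumption (A2)
    (V W : Lp ℝ 1 η →ₗ[ℝ] Lp ℝ 1 η)
    (hV : IsMarkovOp η V) (hW : IsMarkovOp η W)
    (hVW : Q = V ∘ₗ W) (hadj : MarkovAdjoint η Q (W ∘ₗ V))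
    -- `Q` is mixing
    (hmix : ∀ φ ψ : Lp ℝ 1 η, MemLp (φ : Z → ℝ) 2 η → MemLp (ψ : Z → ℝ) 2 η →
      Tendsto (fun n : ℕ => ∫ z, ((Q ^ n) φ : Z → ℝ) z * (ψ : Z → ℝ) z ∂η) atTop
        (𝓝 ((∫ z, (φ : Z → ℝ) z ∂η) * ∫ z, (ψ : Z → ℝ) z ∂η)))
    -- Assumption (A5), with explicit constants C, K, a, b, n₀ and operators A_n
    (C K : ℝ) (hC : 0 < C) (hK : 0 < K)
    (a b n₀ : ℕ) (hn₀ : max a b ≤ n₀)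
    (A : ℕ → Lp ℝ 1 η →ₗ[ℝ] Lp ℝ 1 η) (α : ℕ → ℝ)
    (hαnn : ∀ n, 0 ≤ α n)
    (hαsum : ∀ N : ℕ, ∑ n ∈ Finset.range N, α (n₀ + n) ≤ K)
    (hApos : ∀ n, n₀ ≤ n → ∀ φ : Lp ℝ 1 η, 0 ≤ φ → 0 ≤ A n φ)
    (hAbdd : ∀ n, n₀ ≤ n → ∀ p : ℝ≥0∞, 1 ≤ p → ∀ φ : Lp ℝ 1 η,
      eLpNorm ((A n φ : Lp ℝ 1 η) : Z → ℝ) p η ≤ ENNReal.ofReal (α n) * eLpNorm (φ : Z → ℝ) p η)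
    (hA5 : ∀ n, n₀ ≤ n → ∀ φ : Lp ℝ 1 η, 0 ≤ φ →
      W ((Q ^ (2 * n - a)) φ) ≤
        C • (∑ j ∈ Finset.range (2 * b + 1), ((W ∘ₗ V) ^ n) ((Q ^ (n - b + j)) φ)) + A n φ)
    -- the pair of functions
    (φ ψ : Lp ℝ 1 η) (hφ0 : 0 ≤ φ) (hψ0 : 0 ≤ ψ)
    (hφtop : MemLp (φ : Z → ℝ) ∞ η) (hψtop : MemLp (ψ : Z → ℝ) ∞ η)
    (hφ1 : ∫ z, (φ : Z → ℝ) z ∂η = 1) (hψ1 : ∫ z, (ψ : Z → ℝ) z ∂η = 1) :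
    1 / C ≤
      liminf (fun n : ℕ => ∑ j ∈ Finset.range (2 * b + 1),
        ∫ z, ((Q ^ (n - b + j)) φ : Z → ℝ) z * ((Q ^ n) ψ : Z → ℝ) z ∂η) atTop ∧
    ∀ ε : ℝ, ε < 1 / C →
      ¬ (limsup (fun n : ℕ => ∑ j ∈ Finset.range (2 * b + 1),
        ∫ z, ((Q ^ (n - b + j)) φ : Z → ℝ) z * ((Q ^ n) ψ : Z → ℝ) z ∂η) atTop < ε) :=
  statement4_general η Q hQ V W hV hW hVW hadj hmix C K hC a b n₀ A α hαnn hαsum hAbdd hA5 φ ψ hφ0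
    hψ0 hφtop hψtop hφ1 hψ1
end
end

section
/- Let Z be a standard Borel space, (κ_n)_{n≥0} a sequence of Markov kernels from Z to Z, μ₀ a probability measure on Z, and let ℙ be the probability measure on Z^ℕ (Ionescu–Tulcea measure) determined by ℙ(z₀ ∈ A₀, z₁ ∈ A₁, …, z_n ∈ A_n) = ∫_{A₀} μ₀(dz₀) ∫_{A₁} κ₀(z₀, dz₁) ⋯ ∫_{A_n} κ_{n−1}(z_{n−1}, dz_n) for all n and all measurable A₀, …, A_n ⊆ Z. Set F_tail = ⋂_{n≥0} σ(z_m : m ≥ n), F_tail,even = ⋂_{n≥0} σ(z_{2k} : k ≥ n), and F_tail,odd = ⋂_{n≥0} σ(z_{2k+1} : k ≥ n). Then for every A ∈ F_tail there exist B ∈ F_tail,even and B′ ∈ F_tail,odd with ℙ(A Δ B) = 0 and ℙ(A Δ B′) = 0. Consequently, F_tail is ℙ-trivial if and only if F_tail,even is ℙ-trivial, if and only if F_tail,odd is ℙ-trivial. -/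
/-!
For `F ∈ σ(z_i : i > m)` the conditional probability `ℙ(F | z_0, …, z_m)` is a function
`g(z_m)` of the current state alone: on cylinder sets this is read off from the
finite-dimensional distributions, and Dynkin's π-λ theorem extends it to all such `F`.
A tail set `A` lies in every `σ(z_i : i > φ n)`, so Lévy's upward theorem gives
`g_n(z_{φ n}) → 1_A` almost surely. The event `B = {g_n(z_{φ n}) → 1}` is measurable with respect
to `⋂_N σ(z_{φ k} : k ≥ N)` and agrees with `A` almost surely; `φ k = 2k` and `φ k = 2k + 1`
give the even and odd statements, and triviality transfers along sets that agree a.s.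
-/

open MeasureTheory Filter ENNReal Topology ProbabilityTheory

noncomputable section

/-- `chainProbSeq κ n [A₁,…,Aₖ] z = ∫_{A₁} κ_n(z,dz₁) ∫_{A₂} κ_{n+1}(z₁,dz₂) ⋯`. -/
def chainProbSeq {Z : Type*} [MeasurableSpace Z] (κ : ℕ → Kernel Z Z) :
    ℕ → List (Set Z) → Z → ℝ≥0∞
  | _, [], _ => 1
  | n, A :: rest, z => ∫⁻ y in A, chainProbSeq κ (n + 1) rest y ∂(κ n z)

/-- The σ-algebra `σ(z_m : m ≥ n)` on `Z^ℕ`. -/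
def fromSA (Z : Type*) [MeasurableSpace Z] (n : ℕ) : MeasurableSpace (ℕ → Z) :=
  ⨆ m : ℕ, ⨆ _ : n ≤ m, MeasurableSpace.comap (fun ω : ℕ → Z => ω m) inferInstance

/-- The tail σ-algebra `F_tail = ⋂_{n≥0} σ(z_m : m ≥ n)` on `Z^ℕ`. -/
def tailSA (Z : Type*) [MeasurableSpace Z] : MeasurableSpace (ℕ → Z) :=
  ⨅ n : ℕ, fromSA Z n

/-- The even tail σ-algebra `F_tail,even = ⋂_{n≥0} σ(z_{2k} : k ≥ n)`. -/
def tailEvenSA (Z : Type*) [MeasurableSpace Z] : MeasurableSpace (ℕ → Z) :=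
  ⨅ n : ℕ, ⨆ k : ℕ, ⨆ _ : n ≤ k,
    MeasurableSpace.comap (fun ω : ℕ → Z => ω (2 * k)) inferInstance

/-- The odd tail σ-algebra `F_tail,odd = ⋂_{n≥0} σ(z_{2k+1} : k ≥ n)`. -/
def tailOddSA (Z : Type*) [MeasurableSpace Z] : MeasurableSpace (ℕ → Z) :=
  ⨅ n : ℕ, ⨆ k : ℕ, ⨆ _ : n ≤ k,
    MeasurableSpace.comap (fun ω : ℕ → Z => ω (2 * k + 1)) inferInstance

namespace MarkovChainTail

open Set Function

variable {Z : Type*} [MeasurableSpace Z]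

section CoordinateSigmaAlgebras

variable (Z) in
def coordSA (s : Set ℕ) : MeasurableSpace (ℕ → Z) :=
  ⨆ i ∈ s, MeasurableSpace.comap (fun ω : ℕ → Z => ω i) inferInstance

lemma comap_eval_le_coordSA {s : Set ℕ} {i : ℕ} (hi : i ∈ s) :
    MeasurableSpace.comap (fun ω : ℕ → Z => ω i) inferInstance ≤ coordSA Z s :=
  le_iSup₂ (f := fun i (_ : i ∈ s) => MeasurableSpace.comap (fun ω : ℕ → Z => ω i) inferInstance)
    i hi

lemma measurable_eval_coordSA {s : Set ℕ} {i : ℕ} (hi : i ∈ s) :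
    Measurable[coordSA Z s] (fun ω : ℕ → Z => ω i) :=
  measurable_iff_comap_le.mpr (comap_eval_le_coordSA hi)

lemma coordSA_le_pi (s : Set ℕ) : coordSA Z s ≤ MeasurableSpace.pi :=
  iSup₂_le fun i _ => (measurable_pi_apply i).comap_le

lemma coordSA_mono : Monotone (coordSA Z) :=
  fun _ _ hst => iSup₂_le fun _ hi => comap_eval_le_coordSA (hst hi)

variable (Z) in
def pastFiltration : Filtration ℕ (MeasurableSpace.pi : MeasurableSpace (ℕ → Z)) where
  seq m := coordSA Z (Iic m)
  mono' _ _ h := coordSA_mono (Iic_subset_Iic.mpr h)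
  le' _ := coordSA_le_pi _

lemma iSup_pastFiltration : ⨆ m, pastFiltration Z m = MeasurableSpace.pi :=
  le_antisymm (iSup_le fun _ => coordSA_le_pi _)
    (iSup_le fun i => le_iSup_of_le i (comap_eval_le_coordSA self_mem_Iic))

variable (Z) in
def boxes (s : Set ℕ) : Set (Set (ℕ → Z)) :=
  {B | ∃ (A : ℕ → Set Z) (b : ℕ), (∀ i, MeasurableSet (A i)) ∧ (∀ i ∉ s ∩ Iic b, A i = univ) ∧
    B = univ.pi A}

lemma univ_mem_boxes (s : Set ℕ) : univ ∈ boxes Z s :=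
  ⟨fun _ => univ, 0, fun _ => .univ, fun _ _ => rfl, pi_univ _ |>.symm⟩

lemma measurableSet_of_mem_boxes {s : Set ℕ} {B : Set (ℕ → Z)} (hB : B ∈ boxes Z s) :
    MeasurableSet B := by
  obtain ⟨A, -, hA, -, rfl⟩ := hB
  exact .univ_pi hA

lemma isPiSystem_boxes (s : Set ℕ) : IsPiSystem (boxes Z s) := by
  rintro _ ⟨A, a, hA, hAs, rfl⟩ _ ⟨B, b, hB, hBs, rfl⟩ -
  refine ⟨fun i => A i ∩ B i, max a b, fun i => (hA i).inter (hB i), fun i hi => ?_,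
    pi_inter_distrib.symm⟩
  have hsub : ∀ c ≤ max a b, s ∩ Iic c ⊆ s ∩ Iic (max a b) :=
    fun c hc => inter_subset_inter_right _ (Iic_subset_Iic.mpr hc)
  simp only [hAs i fun h => hi (hsub a (le_max_left a b) h),
    hBs i fun h => hi (hsub b (le_max_right a b) h), inter_self]

lemma coordSA_eq_generateFrom_boxes (s : Set ℕ) :
    coordSA Z s = MeasurableSpace.generateFrom (boxes Z s) := by
  classical
  refine le_antisymm (iSup₂_le fun i hi => ?_) (MeasurableSpace.generateFrom_le ?_)
  · rintro _ ⟨S, hS, rfl⟩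
    refine MeasurableSpace.measurableSet_generateFrom
      ⟨update (fun _ => univ) i S, i, fun j => ?_, fun j hj => ?_,
        by rw [univ_pi_update_univ]⟩
    · rcases eq_or_ne j i with rfl | h
      · simpa using hS
      · simp [h]
    · have h : j ≠ i := by rintro rfl; exact hj ⟨hi, self_mem_Iic⟩
      simp [h]
  · rintro _ ⟨A, b, hA, hAs, rfl⟩
    rw [univ_pi_eq_iInter]
    refine MeasurableSet.iInter fun i => ?_
    by_cases hi : i ∈ s ∩ Iic b
    · exact comap_eval_le_coordSA hi.1 _ ⟨A i, hA i, rfl⟩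
    · simp [hAs i hi]

end CoordinateSigmaAlgebras

section ConstrainedLaws

variable (κ : ℕ → Kernel Z Z) (A : ℕ → Set Z)

/-- The law at time `n + k` of the chain with kernels `κ` started from `ν` at time `n`, restricted
to the paths with `z i ∈ A i` for `n < i ≤ n + k`. -/
def constrainedLaw (n : ℕ) (ν : Measure Z) : ℕ → Measure Z
  | 0 => ν
  | k + 1 => (κ (n + k) ∘ₘ constrainedLaw n ν k).restrict (A (n + k + 1))

lemma constrainedLaw_succ' (n : ℕ) (ν : Measure Z) (k : ℕ) :
    constrainedLaw κ A n ν (k + 1) =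
      constrainedLaw κ A (n + 1) ((κ n ∘ₘ ν).restrict (A (n + 1))) k := by
  induction k with
  | zero => rfl
  | succ k ih =>
    rw [constrainedLaw, ih, constrainedLaw, show n + (k + 1) = n + 1 + k by omega]

lemma constrainedLaw_add (n : ℕ) (ν : Measure Z) (k j : ℕ) :
    constrainedLaw κ A n ν (k + j) =
      constrainedLaw κ A (n + k) (constrainedLaw κ A n ν k) j := by
  induction j with
  | zero => rfl
  | succ j ih => rw [← add_assoc, constrainedLaw, ih, constrainedLaw, add_assoc n k j]

variable {κ A} in
lemma constrainedLaw_congr {B : ℕ → Set Z} {n : ℕ} (ν : Measure Z) {k : ℕ}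
    (h : ∀ i ∈ Ioc n (n + k), A i = B i) :
    constrainedLaw κ A n ν k = constrainedLaw κ B n ν k := by
  induction k with
  | zero => rfl
  | succ k ih =>
    rw [constrainedLaw, constrainedLaw, ih fun i hi => h i ⟨hi.1, Nat.le_succ_of_le hi.2⟩,
      h (n + k + 1) ⟨by omega, by omega⟩]

lemma measurable_chainProbSeq [∀ n, IsSFiniteKernel (κ n)] :
    ∀ (n : ℕ) (L : List (Set Z)), (∀ S ∈ L, MeasurableSet S) → Measurable (chainProbSeq κ n L)
  | _, [], _ => measurable_const
  | n, S :: L, hL =>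
    (measurable_chainProbSeq (n + 1) L fun T hT => hL T (.tail _ hT)).setLIntegral_kernel
      (hL S (.head _))

lemma constrainedLaw_apply_univ [∀ n, IsSFiniteKernel (κ n)] (hA : ∀ i, MeasurableSet (A i))
    (k n : ℕ) (ν : Measure Z) : constrainedLaw κ A n ν k univ =
      ∫⁻ z, chainProbSeq κ n (List.ofFn fun i : Fin k => A (n + 1 + i)) z ∂ν := by
  induction k generalizing n ν with
  | zero => simp [constrainedLaw, chainProbSeq]
  | succ k ih =>
    have hL : ∀ S ∈ List.ofFn (fun i : Fin k => A (n + 1 + 1 + i)), MeasurableSet S := by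
      simp [List.mem_ofFn, hA]
    rw [constrainedLaw_succ', ih, ← lintegral_indicator (hA _),
      Measure.lintegral_bind (κ n).aemeasurable
        ((measurable_chainProbSeq κ _ _ hL).indicator (hA _)).aemeasurable, List.ofFn_succ]
    refine lintegral_congr fun z => ?_
    simp only [chainProbSeq, lintegral_indicator (hA _), Fin.val_zero, Fin.val_succ, add_zero,
      add_assoc, add_comm 1]

end ConstrainedLaws

section PathLaw

variable (κ : ℕ → Kernel Z Z) (A : ℕ → Set Z) (μ₀ : Measure Z)

/-- The law of `z m` under the chain with initial law `μ₀`, restricted to `z i ∈ A i` for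
`i ≤ m`. -/
def pathLaw (m : ℕ) : Measure Z :=
  constrainedLaw κ A 0 (μ₀.restrict (A 0)) m

variable {A} in
lemma pathLaw_congr {B : ℕ → Set Z} {m : ℕ} (h : ∀ i ≤ m, A i = B i) :
    pathLaw κ A μ₀ m = pathLaw κ B μ₀ m := by
  rw [pathLaw, pathLaw, h 0 (Nat.zero_le m)]
  exact constrainedLaw_congr _ fun i hi => h i (by simpa using hi.2)

lemma pathLaw_restrict {m : ℕ} {S : Set Z} (hS : MeasurableSet S) :
    (pathLaw κ A μ₀ m).restrict S = pathLaw κ (update A m (A m ∩ S)) μ₀ m := by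
  cases m with
  | zero => simp [pathLaw, constrainedLaw, Measure.restrict_restrict hS, inter_comm]
  | succ m =>
    have h : pathLaw κ A μ₀ m = pathLaw κ (update A (m + 1) (A (m + 1) ∩ S)) μ₀ m :=
      pathLaw_congr κ μ₀ fun i hi => (update_of_ne (by omega) _ _).symm
    simp only [pathLaw] at h
    simp only [pathLaw, constrainedLaw, Measure.restrict_restrict hS, zero_add,
      update_self, h, inter_comm]

end PathLaw

section MarkovProperty

variable {κ : ℕ → Kernel Z Z} {μ₀ : Measure Z} {P : Measure (ℕ → Z)}

variable (κ μ₀ P) in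
def IsMarkovChainLaw : Prop :=
  ∀ (A₀ : Set Z) (L : List (Set Z)), MeasurableSet A₀ → (∀ A ∈ L, MeasurableSet A) →
    P {ω | ω 0 ∈ A₀ ∧ ∀ i : Fin L.length, ω (1 + (i : ℕ)) ∈ L.get i} =
      ∫⁻ z in A₀, chainProbSeq κ 0 L z ∂μ₀

variable [∀ n, IsSFiniteKernel (κ n)]

lemma IsMarkovChainLaw.measure_univ_pi (hP : IsMarkovChainLaw κ μ₀ P) {A : ℕ → Set Z}
    (hA : ∀ i, MeasurableSet (A i)) {b : ℕ} (hb : ∀ i, b < i → A i = univ) :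
    P (univ.pi A) = pathLaw κ A μ₀ b univ := by
  have hset : univ.pi A = {ω | ω 0 ∈ A 0 ∧ ∀ i : Fin (List.ofFn fun i : Fin b => A (1 + i)).length,
      ω (1 + (i : ℕ)) ∈ (List.ofFn fun i : Fin b => A (1 + i)).get i} := by
    ext ω
    simp only [mem_univ_pi, mem_ofPred_eq, List.get_ofFn]
    constructor
    · intro h
      exact ⟨h 0, fun i => h _⟩
    · rintro ⟨h0, h⟩ i
      rcases i with _ | j
      · exact h0
      by_cases hj : j < b
      · simpa [add_comm] using h ⟨j, by simpa using hj⟩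
      · rw [hb _ (by omega)]; trivial
  rw [hset, hP _ _ (hA 0) (by simp [List.mem_ofFn, hA]), pathLaw, constrainedLaw_apply_univ κ A hA,
    zero_add]

lemma IsMarkovChainLaw.map_eval_restrict_univ_pi (hP : IsMarkovChainLaw κ μ₀ P)
    {A : ℕ → Set Z} (hA : ∀ i, MeasurableSet (A i)) {m : ℕ} (hm : ∀ i, m < i → A i = univ) :
    (P.restrict (univ.pi A)).map (fun ω => ω m) = pathLaw κ A μ₀ m := by
  classical
  ext S hS
  have hupd : ∀ i, MeasurableSet (update A m (A m ∩ S) i) := fun i => by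
    rcases eq_or_ne i m with rfl | h
    · simpa using (hA i).inter hS
    · simpa [h] using hA i
  rw [Measure.map_apply (measurable_pi_apply m) hS,
    Measure.restrict_apply (measurable_pi_apply m hS),
    ← (pathLaw κ A μ₀ m).restrict_apply_univ S,
    pathLaw_restrict κ A μ₀ hS, ← hP.measure_univ_pi hupd fun i hi => ?_]
  · congr 1
    ext ω
    simp only [mem_inter_iff, mem_preimage, mem_univ_pi]
    refine ⟨fun ⟨hωS, hω⟩ i => ?_, fun hω => ⟨?_, fun i => ?_⟩⟩
    · rcases eq_or_ne i m with rfl | hi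
      · rw [update_self]; exact ⟨hω i, hωS⟩
      · rw [update_of_ne hi]; exact hω i
    · have h := hω m
      rw [update_self] at h
      exact h.2
    · have h := hω i
      rcases eq_or_ne i m with rfl | hi
      · rw [update_self] at h
        exact h.1
      · rwa [update_of_ne hi] at h
  · simpa [(show i ≠ m by omega)] using hm i hi

lemma IsMarkovChainLaw.measure_univ_pi_inter_univ_pi (hP : IsMarkovChainLaw κ μ₀ P)
    {A B : ℕ → Set Z} (hA : ∀ i, MeasurableSet (A i)) (hB : ∀ i, MeasurableSet (B i))
    {m j : ℕ} (hAm : ∀ i, m < i → A i = univ) (hBm : ∀ i ∉ Ioc m (m + j), B i = univ) :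
    P (univ.pi A ∩ univ.pi B) =
      ∫⁻ ω in univ.pi A, chainProbSeq κ m (List.ofFn fun i : Fin j => B (m + 1 + i)) (ω m) ∂P := by
  have hAB_le : ∀ i ≤ m, A i ∩ B i = A i := fun i hi => by simp [hBm i (by simp; omega)]
  have hAB_gt : ∀ i, m < i → A i ∩ B i = B i := fun i hi => by simp [hAm i hi]
  have hAB_top : ∀ i, m + j < i → A i ∩ B i = univ := fun i hi => by
    simp [hAm i (by omega), hBm i (by simp; omega)]
  rw [← pi_inter_distrib, hP.measure_univ_pi (fun i => (hA i).inter (hB i)) hAB_top,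
    pathLaw, constrainedLaw_add, ← pathLaw, pathLaw_congr κ μ₀ hAB_le,
    constrainedLaw_congr (B := B) _ fun i hi => hAB_gt i (by simpa using hi.1),
    constrainedLaw_apply_univ κ B hB, zero_add, ← hP.map_eval_restrict_univ_pi hA hAm,
    lintegral_map (measurable_chainProbSeq κ m _ (by simp [List.mem_ofFn, hB]))
      (measurable_pi_apply m)]

end MarkovProperty

section ConditionalProbability

variable {P : Measure (ℕ → Z)} {m : ℕ} {F : Set (ℕ → Z)} {g : Z → ℝ≥0∞}

variable (P m F g) in
/-- `g (z m)` is a version of the conditional probability of `F` given `z 0, …, z m`. -/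
def IsCondProbOfState : Prop :=
  ∀ C, MeasurableSet[coordSA Z (Iic m)] C → P (C ∩ F) = ∫⁻ ω in C, g (ω m) ∂P

variable [IsFiniteMeasure P]

lemma isCondProbOfState_of_boxes
    (h : ∀ C ∈ boxes Z (Iic m), P (C ∩ F) = ∫⁻ ω in C, g (ω m) ∂P) :
    IsCondProbOfState P m F g := by
  have hrestrict : ∀ C, MeasurableSet C → P.restrict F C = P (C ∩ F) :=
    fun C hC => Measure.restrict_apply hC
  have hdensity : ∀ C, MeasurableSet C →
      P.withDensity (fun ω => g (ω m)) C = ∫⁻ ω in C, g (ω m) ∂P :=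
    fun C hC => withDensity_apply _ hC
  intro C hC
  have hle := coordSA_le_pi (Z := Z) (Iic m)
  rw [← hrestrict C (hle C hC), ← hdensity C (hle C hC)]
  refine ext_on_measurableSpace_of_generate_finite _ _ (fun s hs => ?_) hle
    (coordSA_eq_generateFrom_boxes _) (isPiSystem_boxes _) ?_ hC
  · rw [hrestrict s (measurableSet_of_mem_boxes hs), hdensity s (measurableSet_of_mem_boxes hs),
      h s hs]
  · rw [hrestrict _ .univ, hdensity _ .univ, h _ (univ_mem_boxes _)]

lemma IsCondProbOfState.ae_le_one (h : IsCondProbOfState P m F g) (hg : Measurable g) :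
    ∀ᵐ ω ∂P, g (ω m) ≤ 1 := by
  have hle := coordSA_le_pi (Z := Z) (Iic m)
  have hgm : Measurable[coordSA Z (Iic m)] fun ω : ℕ → Z => g (ω m) :=
    hg.comp (measurable_eval_coordSA self_mem_Iic)
  refine ae_of_ae_trim hle (ae_le_of_forall_setLIntegral_le_of_sigmaFinite hgm fun C hC _ => ?_)
  rw [setLIntegral_trim hle hgm hC, setLIntegral_trim hle measurable_const hC, ← h C hC]
  simpa using measure_mono inter_subset_left

lemma IsCondProbOfState.compl (h : IsCondProbOfState P m F g) (hF : MeasurableSet F)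
    (hg : Measurable g) : IsCondProbOfState P m Fᶜ fun z => 1 - g z := by
  intro C hC
  have hC' := coordSA_le_pi (Iic m) C hC
  have hgm : Measurable fun ω : ℕ → Z => g (ω m) := hg.comp (measurable_pi_apply m)
  beta_reduce
  rw [lintegral_sub hgm (h C hC ▸ measure_ne_top P _)
      (ae_restrict_of_ae (h.ae_le_one hg)), setLIntegral_one, ← h C hC, ← sdiff_eq,
    ← sdiff_self_inter, measure_sdiff inter_subset_left (hC'.inter hF).nullMeasurableSet
      (measure_ne_top P _)]

lemma IsCondProbOfState.condExp_ae_eq (h : IsCondProbOfState P m F g) (hF : MeasurableSet F)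
    (hg : Measurable g) :
    P[F.indicator (fun _ => (1 : ℝ)) | pastFiltration Z m] =ᵐ[P] fun ω => (g (ω m)).toReal := by
  have hgm : Measurable fun ω : ℕ → Z => g (ω m) := hg.comp (measurable_pi_apply m)
  have hfin : ∀ C, MeasurableSet[coordSA Z (Iic m)] C → ∫⁻ ω in C, g (ω m) ∂P ≠ ∞ :=
    fun C hC => h C hC ▸ measure_ne_top P _
  refine (ae_eq_condExp_of_forall_setIntegral_eq (coordSA_le_pi _)
    ((integrable_const 1).indicator hF)
    (fun C hC _ => integrable_toReal_of_lintegral_ne_top hgm.aemeasurable (hfin C hC))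
    (fun C hC _ => ?_)
    (hg.comp (measurable_eval_coordSA self_mem_Iic)).ennreal_toReal.aestronglyMeasurable).symm
  rw [integral_toReal hgm.aemeasurable (ae_lt_top' hgm.aemeasurable (hfin C hC)), ← h C hC,
    integral_indicator_const _ hF]
  simp [Measure.real, Measure.restrict_apply hF, inter_comm]

end ConditionalProbability

lemma isCondProbOfState_iUnion {P : Measure (ℕ → Z)} {m : ℕ} {F : ℕ → Set (ℕ → Z)}
    {g : ℕ → Z → ℝ≥0∞} (hF : ∀ i, MeasurableSet (F i)) (hdisj : Pairwise (Disjoint on F))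
    (hg : ∀ i, Measurable (g i)) (h : ∀ i, IsCondProbOfState P m (F i) (g i)) :
    IsCondProbOfState P m (⋃ i, F i) fun z => ∑' i, g i z := by
  intro C hC
  have hC' := coordSA_le_pi (Iic m) C hC
  beta_reduce
  rw [inter_iUnion, measure_iUnion
      (hdisj.mono fun _ _ hij => hij.mono inter_subset_right inter_subset_right)
      fun i => hC'.inter (hF i),
    lintegral_tsum (f := fun i (ω : ℕ → Z) => g i (ω m))
      fun i => ((hg i).comp (measurable_pi_apply m)).aemeasurable]
  exact tsum_congr fun i => h i C hC

variable (Z) in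
def tailAlong (φ : ℕ → ℕ) : MeasurableSpace (ℕ → Z) :=
  ⨅ N, ⨆ k, ⨆ _ : N ≤ k, MeasurableSpace.comap (fun ω : ℕ → Z => ω (φ k)) inferInstance

lemma tailAlong_le_tailSA {φ : ℕ → ℕ} (hφ : Tendsto φ atTop atTop) :
    tailAlong Z φ ≤ tailSA Z := by
  refine le_iInf fun n => ?_
  obtain ⟨N, hN⟩ := eventually_atTop.mp (hφ.eventually_ge_atTop n)
  exact iInf_le_of_le N (iSup₂_le fun k hk => comap_eval_le_coordSA (s := Ici n) (hN k hk))

lemma measurableSet_tailAlong_setOf_tendsto {φ : ℕ → ℕ} {g : ℕ → Z → ℝ}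
    (hg : ∀ n, Measurable (g n)) (c : ℝ) :
    MeasurableSet[tailAlong Z φ] {ω | Tendsto (fun n => g n (ω (φ n))) atTop (𝓝 c)} := by
  refine MeasurableSpace.measurableSet_iInf.2 fun N => ?_
  have hshift : {ω : ℕ → Z | Tendsto (fun n => g n (ω (φ n))) atTop (𝓝 c)} =
      {ω | Tendsto (fun n => g (n + N) (ω (φ (n + N)))) atTop (𝓝 c)} :=
    ext fun ω => (tendsto_add_atTop_iff_nat N).symm
  rw [hshift]
  exact measurableSet_tendsto _ fun n => (hg (n + N)).comp
    (measurable_iff_comap_le.2 (le_iSup₂_of_le (n + N) (Nat.le_add_left N n) le_rfl))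

section TailApproximation

variable {κ : ℕ → Kernel Z Z} [∀ n, IsSFiniteKernel (κ n)] {μ₀ : Measure Z}
  {P : Measure (ℕ → Z)} [IsFiniteMeasure P]

theorem IsMarkovChainLaw.exists_isCondProbOfState (hP : IsMarkovChainLaw κ μ₀ P) (m : ℕ)
    {F : Set (ℕ → Z)} (hF : MeasurableSet[coordSA Z (Ioi m)] F) :
    ∃ g : Z → ℝ≥0∞, Measurable g ∧ IsCondProbOfState P m F g := by
  have hle := coordSA_le_pi (Z := Z) (Ioi m)
  induction F, hF using MeasurableSpace.induction_on_inter (coordSA_eq_generateFrom_boxes _)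
    (isPiSystem_boxes _) with
  | empty => exact ⟨0, measurable_const, fun C _ => by simp⟩
  | basic F hF =>
    obtain ⟨B, b, hB, hBs, rfl⟩ := hF
    -- the probability, from state `z m`, that the chain then passes through `B (m + 1), …, B b`
    refine ⟨chainProbSeq κ m (List.ofFn fun i : Fin (b - m) => B (m + 1 + i)),
      measurable_chainProbSeq κ m _ (by simp [List.mem_ofFn, hB]),
      isCondProbOfState_of_boxes ?_⟩
    rintro _ ⟨A, a, hA, hAs, rfl⟩
    refine hP.measure_univ_pi_inter_univ_pi hA hB (fun i hi => hAs i fun h => ?_)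
      fun i hi => hBs i fun h => hi ⟨h.1, ?_⟩
    · exact absurd h.1 (not_le.mpr hi)
    · have hmi : m < i := h.1
      have hib : i ≤ b := h.2
      omega
  | compl F hF ih =>
    obtain ⟨g, hg, h⟩ := ih
    exact ⟨_, measurable_const.sub hg, h.compl (hle F hF) hg⟩
  | iUnion F hdisj hF ih =>
    choose g hg h using ih
    exact ⟨_, .tsum hg, isCondProbOfState_iUnion (fun i => hle _ (hF i)) hdisj hg h⟩

theorem IsMarkovChainLaw.exists_tailAlong_ae_eq (hP : IsMarkovChainLaw κ μ₀ P) {φ : ℕ → ℕ}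
    (hφ : Tendsto φ atTop atTop) {A : Set (ℕ → Z)} (hA : MeasurableSet[tailSA Z] A) :
    ∃ B, MeasurableSet[tailAlong Z φ] B ∧ P (symmDiff A B) = 0 := by
  have hA_future : ∀ n, MeasurableSet[coordSA Z (Ioi n)] A :=
    fun n => coordSA_mono (fun _ => Nat.lt_of_succ_le) _ (iInf_le (fromSA Z) (n + 1) _ hA)
  have hA_meas : MeasurableSet A := coordSA_le_pi _ _ (hA_future 0)
  choose g hg hcond using fun n => hP.exists_isCondProbOfState (φ n) (hA_future (φ n))
  set u : ℕ → (ℕ → Z) → ℝ := fun n ω => (g n (ω (φ n))).toReal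
  have hlim : ∀ᵐ ω ∂P, Tendsto (u · ω) atTop (𝓝 (A.indicator (fun _ => 1) ω)) := by
    have hA_int : Integrable (A.indicator fun _ => (1 : ℝ)) P :=
      (integrable_const 1).indicator hA_meas
    have hLevy := hA_int.tendsto_ae_condExp (ℱ := pastFiltration Z)
      (by rw [iSup_pastFiltration]; exact stronglyMeasurable_const.indicator hA_meas)
    filter_upwards [hLevy, ae_all_iff.2 fun n => (hcond n).condExp_ae_eq hA_meas (hg n)]
      with ω hω hω'
    exact (hω.comp hφ).congr hω'
  refine ⟨{ω | Tendsto (u · ω) atTop (𝓝 1)}, ?_, ?_⟩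
  · exact measurableSet_tailAlong_setOf_tendsto (fun n => (hg n).ennreal_toReal) 1
  · rw [measure_symmDiff_eq_zero_iff, eventuallyEq_set]
    filter_upwards [hlim] with ω hω
    change ω ∈ A ↔ Tendsto (u · ω) atTop (𝓝 1)
    rw [show Tendsto (u · ω) atTop (𝓝 1) ↔ A.indicator (fun _ => (1 : ℝ)) ω = 1 from
      ⟨tendsto_nhds_unique hω, fun h => h ▸ hω⟩]
    by_cases hωA : ω ∈ A <;> simp [hωA]

end TailApproximation

lemma forall_zero_or_one_iff_of_ae_approx {Ω : Type*} [MeasurableSpace Ω] {μ : Measure Ω}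
    {m₁ m₂ : MeasurableSpace Ω} (hle : m₁ ≤ m₂)
    (happrox : ∀ A, MeasurableSet[m₂] A → ∃ B, MeasurableSet[m₁] B ∧ μ (symmDiff A B) = 0) :
    (∀ A, MeasurableSet[m₂] A → μ A = 0 ∨ μ A = 1) ↔
      (∀ A, MeasurableSet[m₁] A → μ A = 0 ∨ μ A = 1) := by
  refine ⟨fun h A hA => h A (hle A hA), fun h A hA => ?_⟩
  obtain ⟨B, hB, hAB⟩ := happrox A hA
  rw [measure_congr (measure_symmDiff_eq_zero_iff.mp hAB)]
  exact h B hB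

end MarkovChainTail

theorem statement5_general
    {Z : Type*} [MeasurableSpace Z]
    (κ : ℕ → Kernel Z Z) [∀ n, IsMarkovKernel (κ n)]
    (μ₀ : Measure Z)
    (P : Measure (ℕ → Z)) [IsProbabilityMeasure P]
    -- P is the Ionescu–Tulcea measure: its finite-dimensional distributions are
    -- ℙ(z₀ ∈ A₀, …, z_n ∈ A_n) = ∫_{A₀} μ₀(dz₀) ∫_{A₁} κ₀(z₀,dz₁) ⋯ ∫_{A_n} κ_{n−1}(z_{n−1},dz_n)
    (hP : ∀ (A₀ : Set Z) (L : List (Set Z)), MeasurableSet A₀ →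
      (∀ A ∈ L, MeasurableSet A) →
      P {ω | ω 0 ∈ A₀ ∧ ∀ i : Fin L.length, ω (1 + (i : ℕ)) ∈ L.get i} =
        ∫⁻ z in A₀, chainProbSeq κ 0 L z ∂μ₀) :
    (∀ A : Set (ℕ → Z), MeasurableSet[tailSA Z] A →
      (∃ B : Set (ℕ → Z), MeasurableSet[tailEvenSA Z] B ∧ P (symmDiff A B) = 0) ∧
      (∃ B' : Set (ℕ → Z), MeasurableSet[tailOddSA Z] B' ∧ P (symmDiff A B') = 0)) ∧
    ((∀ A : Set (ℕ → Z), MeasurableSet[tailSA Z] A → P A = 0 ∨ P A = 1) ↔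
      (∀ A : Set (ℕ → Z), MeasurableSet[tailEvenSA Z] A → P A = 0 ∨ P A = 1)) ∧
    ((∀ A : Set (ℕ → Z), MeasurableSet[tailSA Z] A → P A = 0 ∨ P A = 1) ↔
      (∀ A : Set (ℕ → Z), MeasurableSet[tailOddSA Z] A → P A = 0 ∨ P A = 1)) := by
  have hP : MarkovChainTail.IsMarkovChainLaw κ μ₀ P := hP
  have h_even : Tendsto (fun k => 2 * k) atTop atTop :=
    tendsto_atTop_mono (fun k => show k ≤ 2 * k by omega) tendsto_id
  have h_odd : Tendsto (fun k => 2 * k + 1) atTop atTop :=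
    tendsto_atTop_mono (fun k => show k ≤ 2 * k + 1 by omega) tendsto_id
  have approx_even := fun A (hA : MeasurableSet[tailSA Z] A) =>
    hP.exists_tailAlong_ae_eq h_even hA
  have approx_odd := fun A (hA : MeasurableSet[tailSA Z] A) =>
    hP.exists_tailAlong_ae_eq h_odd hA
  exact ⟨fun A hA => ⟨approx_even A hA, approx_odd A hA⟩,
    MarkovChainTail.forall_zero_or_one_iff_of_ae_approx
      (MarkovChainTail.tailAlong_le_tailSA h_even) approx_even,
    MarkovChainTail.forall_zero_or_one_iff_of_ae_approx
      (MarkovChainTail.tailAlong_le_tailSA h_odd) approx_odd⟩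

/-- For the Ionescu–Tulcea measure of a sequence of Markov kernels, every tail
set agrees up to a null set with an even-tail set and with an odd-tail set; consequently the
tail σ-algebra is trivial iff the even (equivalently, the odd) tail σ-algebra is trivial. -/
theorem statement5
    {Z : Type*} [MeasurableSpace Z] [StandardBorelSpace Z]
    (κ : ℕ → Kernel Z Z) [∀ n, IsMarkovKernel (κ n)]
    (μ₀ : Measure Z) [IsProbabilityMeasure μ₀]
    (P : Measure (ℕ → Z)) [IsProbabilityMeasure P]
    -- P is the Ionescu–Tulcea measure: its finite-dimensional distributions are
    -- ℙ(z₀ ∈ A₀, …, z_n ∈ A_n) = ∫_{A₀} μ₀(dz₀) ∫_{A₁} κ₀(z₀,dz₁) ⋯ ∫_{A_n} κ_{n−1}(z_{n−1},dz_n)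
    (hP : ∀ (A₀ : Set Z) (L : List (Set Z)), MeasurableSet A₀ →
      (∀ A ∈ L, MeasurableSet A) →
      P {ω | ω 0 ∈ A₀ ∧ ∀ i : Fin L.length, ω (1 + (i : ℕ)) ∈ L.get i} =
        ∫⁻ z in A₀, chainProbSeq κ 0 L z ∂μ₀) :
    (∀ A : Set (ℕ → Z), MeasurableSet[tailSA Z] A →
      (∃ B : Set (ℕ → Z), MeasurableSet[tailEvenSA Z] B ∧ P (symmDiff A B) = 0) ∧
      (∃ B' : Set (ℕ → Z), MeasurableSet[tailOddSA Z] B' ∧ P (symmDiff A B') = 0)) ∧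
    ((∀ A : Set (ℕ → Z), MeasurableSet[tailSA Z] A → P A = 0 ∨ P A = 1) ↔
      (∀ A : Set (ℕ → Z), MeasurableSet[tailEvenSA Z] A → P A = 0 ∨ P A = 1)) ∧
    ((∀ A : Set (ℕ → Z), MeasurableSet[tailSA Z] A → P A = 0 ∨ P A = 1) ↔
      (∀ A : Set (ℕ → Z), MeasurableSet[tailOddSA Z] A → P A = 0 ∨ P A = 1)) :=
  statement5_general κ μ₀ P hP
end
end

section
/- Let Ξ be a finite set and Π = (Π_{jk})_{j,k∈Ξ} a matrix with nonnegative real entries. Let λ > 0 and let h = (h_j) and α = (α_j) be vectors with strictly positive entries such that Πh = λh, αΠ = λα and Σ_j α_j h_j = 1; assume moreover that every nonzero vector with nonnegative entries which is a right eigenvector of Π with eigenvalue λ is a positive scalar multiple of h. Let ι : Ξ → Ξ be an involution with Π_{ι(j)ι(k)} = Π_{kj} for all j, k ∈ Ξ. Define the Parry transition probabilities p_{jk} = Π_{jk} h_k / (λ h_j) and the stationary distribution p_j = α_j h_j. Then for all j, k ∈ Ξ: p_{ι(j)} = p_j and p_{ι(j)ι(k)} = p_k · p_{kj} / p_j. 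-/
/-!
If `M (ι j) (ι k) = M k j` for an involution `ι`, then reindexing by `ι` turns the left
eigenvector `α` into the right eigenvector `α ∘ ι`. By uniqueness of the positive right
eigenvector, `α ∘ ι = c • h` for some `c > 0`, and applying `ι` once more gives `α = c • (h ∘ ι)`.
Both symmetries of the Parry measure are then identities between these quantities.
-/

open Finset

section Reversal

variable {Ξ : Type*} [Fintype Ξ] {M : Ξ → Ξ → ℝ} {ι : Ξ → Ξ}

theorem sum_mul_comp_eq_sum_mul_of_reversal (hι : Function.Involutive ι)
    (hMι : ∀ j k, M (ι j) (ι k) = M k j) (v : Ξ → ℝ) (j : Ξ) :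
    ∑ k, M j k * v (ι k) = ∑ m, v m * M m (ι j) := by
  rw [← Equiv.sum_comp hι.toPerm]
  refine sum_congr rfl fun m _ => ?_
  simp only [Function.Involutive.coe_toPerm, hι m]
  rw [← hMι, hι m, mul_comm]

theorem rightEigen_comp_of_leftEigen_of_reversal (hι : Function.Involutive ι)
    (hMι : ∀ j k, M (ι j) (ι k) = M k j) {lam : ℝ} {α : Ξ → ℝ}
    (hleft : ∀ k, ∑ j, α j * M j k = lam * α k) (j : Ξ) :
    ∑ k, M j k * α (ι k) = lam * α (ι j) := by
  rw [sum_mul_comp_eq_sum_mul_of_reversal hι hMι, hleft]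

end Reversal

section ParryMeasure

variable {Ξ : Type*} {ι : Ξ → Ξ} {h α : Ξ → ℝ} {c : ℝ}

theorem apply_eq_mul_comp_of_comp_eq_mul (hι : Function.Involutive ι)
    (hc : ∀ k, α (ι k) = c * h k) (j : Ξ) : α j = c * h (ι j) := by
  rw [← hc, hι j]

theorem stationary_comp_eq_of_comp_eq_mul (hι : Function.Involutive ι)
    (hc : ∀ k, α (ι k) = c * h k) (j : Ξ) :
    α (ι j) * h (ι j) = α j * h j := by
  rw [hc, apply_eq_mul_comp_of_comp_eq_mul hι hc j]
  ring

theorem transition_comp_eq_of_comp_eq_mul (hι : Function.Involutive ι)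
    (hc : ∀ k, α (ι k) = c * h k) (hc0 : c ≠ 0) (hh : ∀ j, h j ≠ 0)
    (lam m : ℝ) (j k : Ξ) :
    m * h (ι k) / (lam * h (ι j)) = (α k * h k) * (m * h j / (lam * h k)) / (α j * h j) := by
  rw [apply_eq_mul_comp_of_comp_eq_mul hι hc j, apply_eq_mul_comp_of_comp_eq_mul hι hc k]
  have := hh j
  have := hh k
  field_simp

end ParryMeasure

theorem statement8_general
    {Ξ : Type*} [Fintype Ξ]
    (M : Ξ → Ξ → ℝ)
    (lam : ℝ)
    (h α : Ξ → ℝ) (hh : ∀ j, 0 < h j) (hα : ∀ j, 0 < α j)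
    (hleft : ∀ k, ∑ j, α j * M j k = lam * α k)
    -- every nonzero nonnegative right λ-eigenvector of M is a positive multiple of h
    (huniq : ∀ v : Ξ → ℝ, v ≠ 0 → (∀ j, 0 ≤ v j) →
      (∀ j, ∑ k, M j k * v k = lam * v j) → ∃ c : ℝ, 0 < c ∧ v = c • h)
    (ι : Ξ → Ξ) (hinv : ∀ j, ι (ι j) = j)
    (hMι : ∀ j k, M (ι j) (ι k) = M k j) :
    ∀ j k : Ξ,
      α (ι j) * h (ι j) = α j * h j ∧
      M (ι j) (ι k) * h (ι k) / (lam * h (ι j)) =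
        (α k * h k) * (M k j * h j / (lam * h k)) / (α j * h j) := by
  have hι : Function.Involutive ι := hinv
  intro j k
  have hne : (fun k => α (ι k)) ≠ 0 := fun h0 => (hα (ι j)).ne' (congrFun h0 j)
  obtain ⟨c, hc, hαι⟩ := huniq _ hne (fun k => (hα (ι k)).le)
    (rightEigen_comp_of_leftEigen_of_reversal hι hMι hleft)
  have hαι' : ∀ k, α (ι k) = c * h k := fun k => congrFun hαι k
  refine ⟨stationary_comp_eq_of_comp_eq_mul hι hαι' j, ?_⟩
  rw [hMι]
  exact transition_comp_eq_of_comp_eq_mul hι hαι' hc.ne' (fun j => (hh j).ne') lam _ j k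

/-- Symmetries of the Parry measure coming from a time-reversing involution
`ι` of a nonnegative matrix `M` with Perron–Frobenius data `(lam, h, α)`: the stationary
distribution `p_j = α_j h_j` satisfies `p_{ι(j)} = p_j` and the Parry transition probabilities
`p_{jk} = M_{jk} h_k / (lam h_j)` satisfy `p_{ι(j)ι(k)} = p_k p_{kj} / p_j`. -/
theorem statement8
    {Ξ : Type*} [Fintype Ξ]
    (M : Ξ → Ξ → ℝ) (hM : ∀ j k, 0 ≤ M j k)
    (lam : ℝ) (hlam : 0 < lam)
    (h α : Ξ → ℝ) (hh : ∀ j, 0 < h j) (hα : ∀ j, 0 < α j)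
    (hright : ∀ j, ∑ k, M j k * h k = lam * h j)
    (hleft : ∀ k, ∑ j, α j * M j k = lam * α k)
    (hnorm : ∑ j, α j * h j = 1)
    -- every nonzero nonnegative right λ-eigenvector of M is a positive multiple of h
    (huniq : ∀ v : Ξ → ℝ, v ≠ 0 → (∀ j, 0 ≤ v j) →
      (∀ j, ∑ k, M j k * v k = lam * v j) → ∃ c : ℝ, 0 < c ∧ v = c • h)
    (ι : Ξ → Ξ) (hinv : ∀ j, ι (ι j) = j)
    (hMι : ∀ j k, M (ι j) (ι k) = M k j) :
    ∀ j k : Ξ,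
      α (ι j) * h (ι j) = α j * h j ∧
      M (ι j) (ι k) * h (ι k) / (lam * h (ι j)) =
        (α k * h k) * (M k j * h j / (lam * h k)) / (α j * h j) :=
  statement8_general M lam h α hh hα hleft huniq ι hinv hMι
end
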